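/- Let 0 ≤ s ≤ n−2 and let l_1,…,l_{n−s} be positive integers with l_1+⋯+l_{n−s} = n. Let l'_1,…,l'_{n−s} be positive integers with l'_1+⋯+l'_{n−s} = n and |l'_i − l'_j| ≤ 1 for all i, j ∈ {1,…,n−s}. Then ε(K_{n−s}^n(l'_1,…,l'_{n−s})) ≤ ε(K_{n−s}^n(l_1,…,l_{n−s})). -/

import Mathlib

open SimpleGraph

/-- The eccentricity of a vertex: maximum distance to any vertex. -/
noncomputable def ecc {V : Type*} (G : SimpleGraph V) (v : V) : ℕ :=
  ⨆ u, G.dist v u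

/-- The total eccentricity index: sum of eccentricities of all vertices. -/
noncomputable def totalEcc {V : Type*} [Fintype V] (G : SimpleGraph V) : ℕ :=
  ∑ v, ecc G v

/-- A pendant vertex: a vertex of degree one, i.e. with exactly one neighbour. -/
def IsPendant {V : Type*} (G : SimpleGraph V) (v : V) : Prop :=
  ∃! u, G.Adj v u

/-- A cut vertex: a vertex whose removal disconnects the graph. -/
def IsCutVertex {V : Type*} (G : SimpleGraph V) (w : V) : Prop :=
  ¬ (G.induce {v | v ≠ w}).Connected

/-- distance between two subgraphs -/
noncomputable def subgraphDist {V : Type*} (G : SimpleGraph V) (B B' : G.Subgraph) : ℕ :=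
  sInf {d | ∃ u ∈ B.verts, ∃ w ∈ B'.verts, G.dist u w = d}

/-- A 2-connected subgraph: at least two vertices, connected, and no cut vertex. -/
def TwoConn {V : Type*} {G : SimpleGraph V} (H : G.Subgraph) : Prop :=
  2 ≤ H.verts.ncard ∧ H.coe.Connected ∧ ∀ w, ¬ IsCutVertex H.coe w

/-- A block: a maximal 2-connected subgraph. -/
def IsBlock {V : Type*} {G : SimpleGraph V} (H : G.Subgraph) : Prop :=
  TwoConn H ∧ ∀ H' : G.Subgraph, H ≤ H' → TwoConn H' → H' = H

/-- A pendant block: a block containing exactly one cut vertex of `G`. -/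
def IsPendantBlock {V : Type*} (G : SimpleGraph V) (H : G.Subgraph) : Prop :=
  ∃! w, w ∈ H.verts ∧ IsCutVertex G w

/-- `G_{k,l}`: the graph obtained from `G` by attaching two new paths,
with `k` resp. `l` new vertices, at the vertex `v`. -/
def attachTwoPaths {V : Type*} (G : SimpleGraph V) (v : V) (k l : ℕ) :
    SimpleGraph (V ⊕ (Fin k ⊕ Fin l)) :=
  SimpleGraph.fromRel (fun p q =>
    match p, q with
    | .inl x, .inl y => G.Adj x y
    | .inl x, .inr (.inl i) => x = v ∧ i.val = 0
    | .inl x, .inr (.inr i) => x = v ∧ i.val = 0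
    | .inr (.inl i), .inr (.inl j) => i.val + 1 = j.val
    | .inr (.inr i), .inr (.inr j) => i.val + 1 = j.val
    | _, _ => False)

/-- The graph obtained from `H1`, `H2` and the path `P_d = v_1 v_2 … v_d` by identifying
`u ∈ V(H1)`, `v ∈ V(H2)` and `v_1` into a single vertex.  The `Fin (d-1)` part records the
path vertices `v_2, …, v_d`. -/
def glueMid {V1 V2 : Type*} (H1 : SimpleGraph V1) (H2 : SimpleGraph V2)
    (u : V1) (v : V2) (d : ℕ) :
    SimpleGraph (V1 ⊕ ({x : V2 // x ≠ v} ⊕ Fin (d - 1))) :=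
  SimpleGraph.fromRel (fun p q =>
    match p, q with
    | .inl x, .inl y => H1.Adj x y
    | .inl x, .inr (.inl y) => x = u ∧ H2.Adj v y.1
    | .inl x, .inr (.inr i) => x = u ∧ i.val = 0
    | .inr (.inl x), .inr (.inl y) => H2.Adj x.1 y.1
    | .inr (.inr i), .inr (.inr j) => i.val + 1 = j.val
    | _, _ => False)

/-- The graph obtained from `H1`, `H2` and the path `P_d = v_1 v_2 … v_d` by identifying
`u ∈ V(H1)` with `v_1` and `v ∈ V(H2)` with `v_d`.  The `Fin (d-1)` part records the path
vertices `v_2, …, v_d` (the last one being identified with `v`). -/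
def glueEnds {V1 V2 : Type*} (H1 : SimpleGraph V1) (H2 : SimpleGraph V2)
    (u : V1) (v : V2) (d : ℕ) :
    SimpleGraph (V1 ⊕ ({x : V2 // x ≠ v} ⊕ Fin (d - 1))) :=
  SimpleGraph.fromRel (fun p q =>
    match p, q with
    | .inl x, .inl y => H1.Adj x y
    | .inl x, .inr (.inr i) => x = u ∧ i.val = 0
    | .inr (.inl x), .inr (.inl y) => H2.Adj x.1 y.1
    | .inr (.inr i), .inr (.inl y) => i.val + 1 = d - 1 ∧ H2.Adj v y.1
    | .inr (.inr i), .inr (.inr j) => i.val + 1 = j.val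
    | _, _ => False)

/-- `U_{n,g}^l`: the unicyclic graph on `n` vertices obtained by joining one end vertex of
the path `P_{n-g}` to a vertex of the cycle `C_g` by an edge. -/
def UnlGraph (n g : ℕ) : SimpleGraph (Fin (n - g) ⊕ Fin g) :=
  SimpleGraph.fromRel (fun p q =>
    match p, q with
    | .inl i, .inl j => i.val + 1 = j.val
    | .inl i, .inr j => i.val + 1 = n - g ∧ j.val = 0
    | .inr i, .inr j => i.val + 1 = j.val ∨ (i.val = 0 ∧ j.val + 1 = g)
    | _, _ => False)

/-- `U_{n,g}^p`: the unicyclic graph on `n` vertices obtained by attaching `n - g` pendant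
vertices to one vertex of the cycle `C_g`. -/
def UnpGraph (n g : ℕ) : SimpleGraph (Fin g ⊕ Fin (n - g)) :=
  SimpleGraph.fromRel (fun p q =>
    match p, q with
    | .inl i, .inl j => i.val + 1 = j.val ∨ (i.val = 0 ∧ j.val + 1 = g)
    | .inl i, .inr _ => i.val = 0
    | _, _ => False)

/-- The graph obtained by joining the vertex `u` of `H` to the pendant vertex of
`U_{r,g}^l` by an edge. -/
def joinPendant {V : Type*} (H : SimpleGraph V) (u : V) (r g : ℕ) :
    SimpleGraph (V ⊕ (Fin (r - g) ⊕ Fin g)) :=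
  SimpleGraph.fromRel (fun p q =>
    match p, q with
    | .inl x, .inl y => H.Adj x y
    | .inl x, .inr (.inl i) => x = u ∧ i.val = 0
    | .inr a, .inr b => (UnlGraph r g).Adj a b
    | _, _ => False)

/-- `C_{m1,m2}^n` in the case `n = m1 + m2 - 1`: two cycles `C_{m1}` and `C_{m2}`
sharing exactly one vertex (the vertex `0`). -/
def twoCyclesGlued (m1 m2 : ℕ) : SimpleGraph (Fin (m1 + m2 - 1)) :=
  SimpleGraph.fromRel (fun i j =>
    (i.val + 1 = j.val ∧ j.val < m1) ∨ (i.val = 0 ∧ j.val + 1 = m1)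
    ∨ (i.val = 0 ∧ j.val = m1) ∨ (m1 ≤ i.val ∧ i.val + 1 = j.val)
    ∨ (i.val = 0 ∧ j.val + 2 = m1 + m2))

/-- `C_{3,3}^n` for `n > 5`: two triangles `{0,1,2}` and `{n-3,n-2,n-1}` joined by the path
`2, 3, …, n-3` (a path on `n - 4` vertices whose ends are identified with a vertex of each
triangle). -/
def C33 (n : ℕ) : SimpleGraph (Fin n) :=
  SimpleGraph.fromRel (fun i j =>
    (i.val = 0 ∧ j.val = 1) ∨ (i.val = 0 ∧ j.val = 2) ∨ (i.val = 1 ∧ j.val = 2)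
    ∨ (2 ≤ i.val ∧ i.val + 1 = j.val ∧ j.val + 3 ≤ n)
    ∨ (i.val + 3 = n ∧ j.val + 2 = n) ∨ (i.val + 2 = n ∧ j.val + 1 = n)
    ∨ (i.val + 3 = n ∧ j.val + 1 = n))

/-- `T(l, m, d)`: the tree obtained from the path `P_d` by attaching `l` pendant vertices at
one end and `m` pendant vertices at the other end. -/
def Tlmd (l m d : ℕ) : SimpleGraph (Fin d ⊕ (Fin l ⊕ Fin m)) :=
  SimpleGraph.fromRel (fun p q =>
    match p, q with
    | .inl i, .inl j => i.val + 1 = j.val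
    | .inl i, .inr (.inl _) => i.val = 0
    | .inl i, .inr (.inr _) => i.val + 1 = d
    | _, _ => False)

/-- `K_m^n(l_1, …, l_m)`: the graph obtained from the complete graph `K_m` by identifying,
for each `i`, one end vertex of a path on `l i` vertices with the `i`-th vertex of `K_m`.
The vertex `⟨i, 0⟩` is the `i`-th vertex of the complete graph. -/
def Kmn (m : ℕ) (l : Fin m → ℕ) : SimpleGraph ((i : Fin m) × Fin (l i)) :=
  SimpleGraph.fromRel (fun p q =>
    (p.1 = q.1 ∧ p.2.val + 1 = q.2.val) ∨ (p.1 ≠ q.1 ∧ p.2.val = 0 ∧ q.2.val = 0))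

/-- The graph obtained from `H`, `C_{m1}` and `C_{m2}` by identifying the vertex `w` of `H`,
a vertex of `C_{m1}` and a vertex of `C_{m2}` into one vertex. -/
def glueTwoCycles {V : Type*} (H : SimpleGraph V) (w : V) (m1 m2 : ℕ) :
    SimpleGraph (V ⊕ (Fin (m1 - 1) ⊕ Fin (m2 - 1))) :=
  SimpleGraph.fromRel (fun p q =>
    match p, q with
    | .inl x, .inl y => H.Adj x y
    | .inl x, .inr (.inl i) => x = w ∧ (i.val = 0 ∨ i.val + 2 = m1)
    | .inl x, .inr (.inr i) => x = w ∧ (i.val = 0 ∨ i.val + 2 = m2)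
    | .inr (.inl i), .inr (.inl j) => i.val + 1 = j.val
    | .inr (.inr i), .inr (.inr j) => i.val + 1 = j.val
    | _, _ => False)

/-- The graph obtained from `H` and the cycle `C_M` by identifying the vertex `w` of `H`
with one vertex of the cycle. -/
def glueOneCycle {V : Type*} (H : SimpleGraph V) (w : V) (M : ℕ) :
    SimpleGraph (V ⊕ Fin (M - 1)) :=
  SimpleGraph.fromRel (fun p q =>
    match p, q with
    | .inl x, .inl y => H.Adj x y
    | .inl x, .inr i => x = w ∧ (i.val = 0 ∨ i.val + 2 = M)
    | .inr i, .inr j => i.val + 1 = j.val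
    | _, _ => False)

/-!
The vertex at depth `d` on the `i`-th path of `K_m^n(l)` has eccentricity
`max (l i - 1 - d) (d + max_{j ≠ i} l j)`, so `ε` is a function of the sequence `l` alone, invariant
under permuting it. Moving one vertex from a longest path to a path at least two vertices shorter
does not increase `ε` and strictly decreases `∑ l i ^ 2`; repeating this ends at a balanced
sequence, and any two balanced sequences with the same sum are permutations of each other.
-/

open Finset

theorem SimpleGraph.Walk.sub_le_length {V : Type*} {G : SimpleGraph V} (f : V → ℤ)
    (hf : ∀ x y, G.Adj x y → f x ≤ f y + 1) {u v : V} (w : G.Walk u v) :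
    f u - f v ≤ w.length := by
  induction w with
  | nil => simp
  | cons h _ ih =>
    rw [Walk.length_cons]
    push_cast
    linarith [hf _ _ h]

theorem SimpleGraph.Reachable.sub_le_dist {V : Type*} {G : SimpleGraph V} (f : V → ℤ)
    (hf : ∀ x y, G.Adj x y → f x ≤ f y + 1) {u v : V} (h : G.Reachable u v) :
    f u - f v ≤ G.dist u v := by
  obtain ⟨w, hw⟩ := h.exists_walk_length_eq_dist
  exact hw ▸ w.sub_le_length f hf

theorem dist_le_ecc {V : Type*} [Finite V] (G : SimpleGraph V) (v u : V) :
    G.dist v u ≤ ecc G v :=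
  le_ciSup (Set.finite_range _).bddAbove u

/-- `pathEccSum c M` is the total eccentricity of a pendant path on `c` vertices whose root is at
distance `M` from the farthest vertex off the path. -/
def pathEccSum (c M : ℕ) : ℕ := ∑ d ∈ range c, max (c - 1 - d) (d + M)

def otherMax {ι : Type*} [Fintype ι] [DecidableEq ι] (l : ι → ℕ) (i : ι) : ℕ :=
  (univ.erase i).sup l

def eccSum {ι : Type*} [Fintype ι] [DecidableEq ι] (l : ι → ℕ) : ℕ :=
  ∑ i, pathEccSum (l i) (otherMax l i)

def IsBalanced {ι : Type*} (l : ι → ℕ) : Prop := ∀ i j, l i ≤ l j + 1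

section Kmn

variable {m : ℕ} {l : Fin m → ℕ}

theorem kmn_adj_iff {p q : (i : Fin m) × Fin (l i)} :
    (Kmn m l).Adj p q ↔ (p.1 = q.1 ∧ (p.2.val + 1 = q.2.val ∨ q.2.val + 1 = p.2.val)) ∨
      (p.1 ≠ q.1 ∧ p.2.val = 0 ∧ q.2.val = 0) := by
  rw [Kmn, SimpleGraph.fromRel_adj]
  constructor
  · rintro ⟨-, (⟨h1, h2⟩ | ⟨h1, h2, h3⟩) | (⟨h1, h2⟩ | ⟨h1, h2, h3⟩)⟩
    exacts [.inl ⟨h1, .inl h2⟩, .inr ⟨h1, h2, h3⟩, .inl ⟨h1.symm, .inr h2⟩,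
      .inr ⟨Ne.symm h1, h3, h2⟩]
  · rintro (⟨h1, h2 | h2⟩ | ⟨h1, h2, h3⟩)
    · refine ⟨fun h => by rw [h] at h2; omega, .inl (.inl ⟨h1, h2⟩)⟩
    · refine ⟨fun h => by rw [h] at h2; omega, .inr (.inl ⟨h1.symm, h2⟩)⟩
    · exact ⟨fun h => h1 (congrArg Sigma.fst h), .inl (.inr ⟨h1, h2, h3⟩)⟩

theorem kmn_exists_walk_of_le (i : Fin m) {a b : Fin (l i)} (hab : a ≤ b) :
    ∃ w : (Kmn m l).Walk ⟨i, a⟩ ⟨i, b⟩, w.length = b - a := by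
  obtain ⟨k, hk⟩ := Nat.exists_eq_add_of_le (Fin.le_def.mp hab)
  induction k generalizing b with
  | zero =>
    obtain rfl : b = a := Fin.ext hk
    exact ⟨.nil, by simp⟩
  | succ k ih =>
    let b' : Fin (l i) := ⟨a + k, by omega⟩
    obtain ⟨w, hw⟩ := ih (b := b') (Fin.le_def.mpr (by simp [b'])) rfl
    have hadj : (Kmn m l).Adj ⟨i, b'⟩ ⟨i, b⟩ :=
      kmn_adj_iff.mpr (.inl ⟨rfl, .inl (by simp [b']; omega)⟩)
    exact ⟨w.concat hadj, by simp [hw, b']; omega⟩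

theorem kmn_dist_of_le (i : Fin m) {a b : Fin (l i)} (hab : a ≤ b) :
    (Kmn m l).dist ⟨i, a⟩ ⟨i, b⟩ = b - a := by
  obtain ⟨w, hw⟩ := kmn_exists_walk_of_le i hab
  refine le_antisymm (hw ▸ SimpleGraph.dist_le w) ?_
  have depth_lip : ∀ x y, (Kmn m l).Adj x y → (x.2.val : ℤ) ≤ y.2.val + 1 := by
    intro x y h
    rcases kmn_adj_iff.mp h with ⟨-, h | h⟩ | ⟨-, h, h'⟩ <;> omega
  have := (SimpleGraph.Reachable.symm ⟨w⟩).sub_le_dist (fun x => (x.2.val : ℤ)) depth_lip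
  rw [SimpleGraph.dist_comm] at this
  simp only at this
  omega

theorem kmn_dist_of_ne {i j : Fin m} (hij : i ≠ j) (a : Fin (l i)) (b : Fin (l j)) :
    (Kmn m l).dist ⟨i, a⟩ ⟨j, b⟩ = a + b + 1 := by
  obtain ⟨wa, hwa⟩ := kmn_exists_walk_of_le i (a := ⟨0, a.pos⟩) (Fin.le_def.mpr a.val.zero_le)
  obtain ⟨wb, hwb⟩ := kmn_exists_walk_of_le j (a := ⟨0, b.pos⟩) (Fin.le_def.mpr b.val.zero_le)
  have hadj : (Kmn m l).Adj ⟨i, ⟨0, a.pos⟩⟩ ⟨j, ⟨0, b.pos⟩⟩ :=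
    kmn_adj_iff.mpr (.inr ⟨hij, rfl, rfl⟩)
  let w := wa.reverse.append (.cons hadj wb)
  refine le_antisymm ((SimpleGraph.dist_le w).trans (by simp [w, hwa, hwb]; omega)) ?_
  let f : (k : Fin m) × Fin (l k) → ℤ := fun x => if x.1 = i then -x.2.val else x.2.val + 1
  have f_lip : ∀ x y, (Kmn m l).Adj x y → f x ≤ f y + 1 := by
    intro x y h
    simp only [f]
    rcases kmn_adj_iff.mp h with ⟨hxy, h | h⟩ | ⟨hxy, hx, hy⟩
    all_goals split_ifs <;> simp_all <;> omega
  have := (SimpleGraph.Reachable.symm ⟨w⟩).sub_le_dist f f_lip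
  rw [SimpleGraph.dist_comm] at this
  simp only [f, if_neg hij.symm, if_pos] at this
  omega

theorem ecc_kmn (i : Fin m) (d : Fin (l i)) :
    ecc (Kmn m l) ⟨i, d⟩ = max (l i - 1 - d) (d + otherMax l i) := by
  have := d.isLt
  apply le_antisymm
  · have : Nonempty ((k : Fin m) × Fin (l k)) := ⟨⟨i, d⟩⟩
    refine ciSup_le fun ⟨j, b⟩ => ?_
    have := b.isLt
    by_cases hji : j = i
    · subst hji
      rcases le_total d b with h | h
      · rw [kmn_dist_of_le j h]; omega
      · rw [SimpleGraph.dist_comm, kmn_dist_of_le j h]; omega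
    · have : l j ≤ otherMax l i := le_sup (mem_erase.mpr ⟨hji, mem_univ j⟩)
      rw [kmn_dist_of_ne (Ne.symm hji)]
      omega
  · have h_end := dist_le_ecc (Kmn m l) ⟨i, d⟩ ⟨i, ⟨l i - 1, by omega⟩⟩
    rw [kmn_dist_of_le i (Fin.le_def.mpr (by simp; omega))] at h_end
    have h_root := dist_le_ecc (Kmn m l) ⟨i, d⟩ ⟨i, ⟨0, d.pos⟩⟩
    rw [SimpleGraph.dist_comm, kmn_dist_of_le i (Fin.le_def.mpr d.val.zero_le)] at h_root
    have h_other : otherMax l i ≤ ecc (Kmn m l) ⟨i, d⟩ - d := Finset.sup_le fun j hj => by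
      obtain ⟨hji, -⟩ := mem_erase.mp hj
      rcases Nat.eq_zero_or_pos (l j) with h0 | hpos
      · omega
      · have := dist_le_ecc (Kmn m l) ⟨i, d⟩ ⟨j, ⟨l j - 1, by omega⟩⟩
        rw [kmn_dist_of_ne (Ne.symm hji)] at this
        simp only at this
        omega
    simp only at h_end h_root
    omega

theorem totalEcc_kmn : totalEcc (Kmn m l) = eccSum l := by
  rw [totalEcc, eccSum, Fintype.sum_sigma]
  refine Fintype.sum_congr _ _ fun i => ?_
  rw [pathEccSum, ← Fin.sum_univ_eq_sum_range (fun d => max (l i - 1 - d) (d + otherMax l i))]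
  exact Fintype.sum_congr _ _ fun d => ecc_kmn i d

end Kmn

theorem pathEccSum_mono (c : ℕ) : Monotone (pathEccSum c) := fun _ _ h =>
  sum_le_sum fun _ _ => max_le_max le_rfl (by omega)

theorem pathEccSum_succ (c M : ℕ) :
    pathEccSum (c + 1) M = max c M + pathEccSum c (M + 1) := by
  rw [pathEccSum, sum_range_succ', add_comm, pathEccSum]
  congr 1
  · simp
  · exact sum_congr rfl fun d _ => by congr 1 <;> omega

theorem pathEccSum_eq_of_le {c M : ℕ} (h : c ≤ M + 1) :
    pathEccSum c M = ∑ d ∈ range c, d + c * M := by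
  rw [pathEccSum, ← card_range c, ← smul_eq_mul, ← sum_const, card_range, ← sum_add_distrib]
  exact sum_congr rfl fun d hd => max_eq_right (by rw [mem_range] at hd; omega)

theorem pathEccSum_succ_of_le {c M : ℕ} (h : c ≤ M) :
    pathEccSum (c + 1) M = pathEccSum c M + (c + M) := by
  rw [pathEccSum_eq_of_le (by omega), pathEccSum_eq_of_le (by omega), sum_range_succ]
  ring

theorem pathEccSum_add_one_right {c M : ℕ} (h : c ≤ M + 1) :
    pathEccSum c (M + 1) = pathEccSum c M + c := by
  rw [pathEccSum_eq_of_le (by omega), pathEccSum_eq_of_le h]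
  ring

theorem pathEccSum_transfer_le {c S K : ℕ} (hS : S + 1 ≤ c) (hK : K ≤ c + 1) :
    pathEccSum c (max (S + 1) K) + pathEccSum (S + 1) (max c K) ≤
      pathEccSum (c + 1) (max S K) + pathEccSum S (c + 1) := by
  rcases Nat.lt_or_eq_of_le hK with hK | rfl
  · have hmono := pathEccSum_mono c (show max (S + 1) K ≤ max S K + 1 by omega)
    rw [max_eq_left (by omega : K ≤ c), pathEccSum_succ c, max_eq_left (by omega : max S K ≤ c),
      pathEccSum_succ_of_le (by omega : S ≤ c), pathEccSum_add_one_right (by omega : S ≤ c + 1)]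
    omega
  · rw [max_eq_right (by omega), max_eq_right (by omega), max_eq_right (by omega),
      pathEccSum_succ_of_le (c := S) (by omega), pathEccSum_succ_of_le (c := c) (by omega)]
    omega

section Transfer

variable {ι : Type*} [DecidableEq ι] {l : ι → ℕ} {i j : ι}

def transfer (l : ι → ℕ) (i j : ι) : ι → ℕ :=
  Function.update (Function.update l i (l i - 1)) j (l j + 1)

theorem transfer_apply_left (hij : i ≠ j) : transfer l i j i = l i - 1 := by
  simp [transfer, hij]

theorem transfer_apply_right : transfer l i j j = l j + 1 := by
  simp [transfer]

theorem transfer_apply_of_ne {k : ι} (hi : k ≠ i) (hj : k ≠ j) : transfer l i j k = l k := by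
  simp [transfer, hi, hj]

variable [Fintype ι]

theorem sum_eq_add_add_sum_erase_erase {M : Type*} [AddCommMonoid M] (hij : i ≠ j)
    (g : ι → M) : ∑ k, g k = g i + g j + ∑ k ∈ (univ.erase i).erase j, g k := by
  rw [← add_sum_erase _ g (mem_univ i),
    ← add_sum_erase _ g (mem_erase.mpr ⟨hij.symm, mem_univ j⟩), add_assoc]

theorem sum_comp_transfer {M : Type*} [AddCommMonoid M] (hij : i ≠ j) (g : ℕ → M) :
    ∑ k, g (transfer l i j k) + (g (l i) + g (l j)) =
      ∑ k, g (l k) + (g (l i - 1) + g (l j + 1)) := by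
  have hrest : ∑ k ∈ (univ.erase i).erase j, g (transfer l i j k) =
      ∑ k ∈ (univ.erase i).erase j, g (l k) := sum_congr rfl fun k hk => by
    rw [mem_erase, mem_erase] at hk
    rw [transfer_apply_of_ne hk.2.1 hk.1]
  rw [sum_eq_add_add_sum_erase_erase hij, sum_eq_add_add_sum_erase_erase hij (fun k => g (l k)),
    hrest, transfer_apply_left hij, transfer_apply_right]
  abel

theorem otherMax_eq_max (l : ι → ℕ) (hij : i ≠ j) :
    otherMax l i = max (l j) (((univ.erase i).erase j).sup l) := by
  conv_lhs => rw [otherMax, ← insert_erase (mem_erase.mpr ⟨hij.symm, mem_univ j⟩), sup_insert]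

theorem otherMax_eq_of_forall_le (hmax : ∀ k, l k ≤ l i) (hj : j ≠ i) : otherMax l j = l i :=
  le_antisymm (Finset.sup_le fun k _ => hmax k) (le_sup (mem_erase.mpr ⟨hj.symm, mem_univ _⟩))

theorem otherMax_comp_perm (l : ι → ℕ) (σ : Equiv.Perm ι) (i : ι) :
    otherMax (l ∘ σ) i = otherMax l (σ i) := by
  have : univ.erase (σ i) = (univ.erase i).map σ.toEmbedding := by
    rw [map_erase, map_univ_equiv]
    rfl
  rw [otherMax, otherMax, this, sup_map]
  rfl

theorem eccSum_comp_perm (l : ι → ℕ) (σ : Equiv.Perm ι) : eccSum (l ∘ σ) = eccSum l := by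
  simp only [eccSum, otherMax_comp_perm, Function.comp_apply]
  exact Equiv.sum_comp σ fun i => pathEccSum (l i) (otherMax l i)

theorem eccSum_transfer_le (hmax : ∀ k, l k ≤ l i) (hgap : l j + 2 ≤ l i) :
    eccSum (transfer l i j) ≤ eccSum l := by
  have hij : i ≠ j := by rintro rfl; omega
  set K := ((univ.erase i).erase j).sup l
  have hK : ((univ.erase i).erase j).sup (transfer l i j) = K := sup_congr rfl fun k hk => by
    rw [mem_erase, mem_erase] at hk
    exact transfer_apply_of_ne hk.2.1 hk.1
  have hKi : K ≤ l i := Finset.sup_le fun k _ => hmax k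
  have head : pathEccSum (transfer l i j i) (otherMax (transfer l i j) i) +
      pathEccSum (transfer l i j j) (otherMax (transfer l i j) j) ≤
      pathEccSum (l i) (otherMax l i) + pathEccSum (l j) (otherMax l j) := by
    obtain ⟨c, hc⟩ : ∃ c, l i = c + 1 := ⟨l i - 1, by omega⟩
    rw [otherMax_eq_max _ hij, otherMax_eq_max _ hij.symm, erase_right_comm (s := univ) (a := j),
      hK, otherMax_eq_max l hij, otherMax_eq_of_forall_le hmax hij.symm, transfer_apply_left hij,
      transfer_apply_right, hc, Nat.add_sub_cancel]
    exact pathEccSum_transfer_le (by omega) (by omega)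
  have others : ∀ k ∈ (univ.erase i).erase j,
      pathEccSum (transfer l i j k) (otherMax (transfer l i j) k) ≤
        pathEccSum (l k) (otherMax l k) := fun k hk => by
    rw [mem_erase, mem_erase] at hk
    rw [transfer_apply_of_ne hk.2.1 hk.1, otherMax_eq_of_forall_le hmax hk.2.1]
    refine pathEccSum_mono _ (Finset.sup_le fun k' _ => ?_)
    by_cases hk'i : k' = i
    · rw [hk'i, transfer_apply_left hij]; omega
    by_cases hk'j : k' = j
    · rw [hk'j, transfer_apply_right]; omega
    rw [transfer_apply_of_ne hk'i hk'j]; exact hmax k'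
  rw [eccSum, eccSum, sum_eq_add_add_sum_erase_erase hij,
    sum_eq_add_add_sum_erase_erase hij (fun k => pathEccSum (l k) (otherMax l k))]
  exact add_le_add head (sum_le_sum others)

end Transfer

section Balanced

variable {ι : Type*} [Fintype ι] {l l' : ι → ℕ}

theorem IsBalanced.values [Nonempty ι] (hl : IsBalanced l) :
    (∀ i, l i = (∑ k, l k) / Fintype.card ι ∨ l i = (∑ k, l k) / Fintype.card ι + 1) ∧
      #{i | l i = (∑ k, l k) / Fintype.card ι + 1} = (∑ k, l k) % Fintype.card ι := by
  obtain ⟨i₀, -, hmin⟩ := exists_min_image univ l univ_nonempty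
  have hval : ∀ i, l i = l i₀ ∨ l i = l i₀ + 1 := fun i => by
    have := hmin i (mem_univ i)
    have := hl i i₀
    omega
  have ht : #{i | l i = l i₀ + 1} < Fintype.card ι :=
    card_lt_card (filter_ssubset.mpr ⟨i₀, mem_univ _, by omega⟩)
  have hsum : ∑ i, l i = Fintype.card ι * l i₀ + #{i | l i = l i₀ + 1} := by
    calc ∑ i, l i = ∑ i, (l i₀ + if l i = l i₀ + 1 then 1 else 0) :=
          sum_congr rfl fun i _ => by split_ifs <;> have := hval i <;> omega
      _ = Fintype.card ι * l i₀ + #{i | l i = l i₀ + 1} := by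
          rw [sum_add_distrib, sum_const, sum_boole, card_univ, smul_eq_mul, Nat.cast_id]
  have hdiv : (∑ i, l i) / Fintype.card ι = l i₀ := by
    rw [hsum, Nat.mul_add_div Fintype.card_pos, Nat.div_eq_of_lt ht, add_zero]
  have hmod : (∑ i, l i) % Fintype.card ι = #{i | l i = l i₀ + 1} := by
    rw [hsum, Nat.mul_add_mod, Nat.mod_eq_of_lt ht]
  rw [hdiv, hmod]
  exact ⟨hval, rfl⟩

theorem IsBalanced.exists_perm_comp_eq (hl : IsBalanced l) (hl' : IsBalanced l')
    (hsum : ∑ i, l i = ∑ i, l' i) : ∃ σ : Equiv.Perm ι, l ∘ σ = l' := by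
  cases isEmpty_or_nonempty ι
  · exact ⟨1, funext isEmptyElim⟩
  obtain ⟨hval, hcard⟩ := hl.values
  obtain ⟨hval', hcard'⟩ := hl'.values
  rw [hsum] at hval hcard
  set q := (∑ i, l' i) / Fintype.card ι
  let e : {i // l' i = q + 1} ≃ {i // l i = q + 1} :=
    Fintype.equivOfCardEq (by rw [Fintype.card_subtype, Fintype.card_subtype, hcard, hcard'])
  refine ⟨e.extendSubtype, funext fun i => ?_⟩
  by_cases hi : l' i = q + 1
  · rw [Function.comp_apply, e.extendSubtype_mem i hi, hi]
  · have := e.extendSubtype_not_mem i hi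
    have := hval (e.extendSubtype i)
    have := hval' i
    simp only [Function.comp_apply]
    omega

theorem eccSum_le_of_isBalanced [DecidableEq ι] (hl' : IsBalanced l')
    (hsum : ∑ i, l i = ∑ i, l' i) : eccSum l' ≤ eccSum l := by
  induction hN : ∑ i, l i * l i using Nat.strong_induction_on generalizing l with
  | _ N ih =>
  by_cases hl : IsBalanced l
  · obtain ⟨σ, rfl⟩ := hl.exists_perm_comp_eq hl' hsum
    rw [eccSum_comp_perm]
  simp only [IsBalanced, not_forall, not_le] at hl
  obtain ⟨i₁, j, hgap⟩ := hl
  obtain ⟨i, -, hmax⟩ := exists_max_image univ l ⟨i₁, mem_univ _⟩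
  have hmax : ∀ k, l k ≤ l i := fun k => hmax k (mem_univ k)
  have hgap : l j + 2 ≤ l i := by have := hmax i₁; omega
  have hij : i ≠ j := by rintro rfl; omega
  have hsum_transfer := sum_comp_transfer (l := l) hij id
  have hsq_transfer := sum_comp_transfer (l := l) hij fun x => x * x
  have hsq : (l i - 1) * (l i - 1) + (l j + 1) * (l j + 1) < l i * l i + l j * l j := by
    obtain ⟨c, hc⟩ : ∃ c, l i = c + 1 := ⟨l i - 1, by omega⟩
    rw [hc, Nat.add_sub_cancel]
    nlinarith
  simp only [id] at hsum_transfer hsq_transfer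
  exact (ih _ (by omega) (by omega) rfl).trans (eccSum_transfer_le hmax hgap)

end Balanced

theorem stmt13_general (n s : ℕ) (l l' : Fin (n - s) → ℕ) (hsum : ∑ i, l i = n)
    (hsum' : ∑ i, l' i = n) (hbal : ∀ i j, l' i ≤ l' j + 1) :
    totalEcc (Kmn (n - s) l') ≤ totalEcc (Kmn (n - s) l) := by
  rw [totalEcc_kmn, totalEcc_kmn]
  exact eccSum_le_of_isBalanced hbal (hsum.trans hsum'.symm)

theorem stmt13 (n s : ℕ) (hn : 2 ≤ n) (hs : s ≤ n - 2)
    (l l' : Fin (n - s) → ℕ)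
    (hpos : ∀ i, 1 ≤ l i) (hsum : ∑ i, l i = n)
    (hpos' : ∀ i, 1 ≤ l' i) (hsum' : ∑ i, l' i = n)
    (hbal : ∀ i j, l' i ≤ l' j + 1) :
    totalEcc (Kmn (n - s) l') ≤ totalEcc (Kmn (n - s) l) :=
  stmt13_general n s l l' hsum hsum' hbal
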